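/- arXiv:2406.11828 — 4 statements merged into one kernel-verified Lean document; each statement's English description precedes it below -/
import Mathlib

section
/- Let (a^t)_{t≥0} be a positive real sequence with a^{t+1} = a^t + c·(a^t)^{p-1} for c > 0 and integer p ≥ 3, and suppose a^t ≤ 1 for all t ≤ T - 1. Then for all t ≤ T with the denominator positive, a^t ≤ a^0 / (1 - c(1+c)^{p-1}(p-2)(a^0)^{p-2} t)^{1/(p-2)}. -/
lemma aux_pow (x : ℝ) (hx : 0 ≤ x) : ∀ q : ℕ, (1+x)^q - 1 ≤ q * x * (1+x)^q := by
  intro q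
  induction q with
  | zero => simp
  | succ n ih =>
    have h1 : (1:ℝ) ≤ (1+x)^(n+1) := one_le_pow₀ (by linarith)
    have h0 : (0:ℝ) ≤ (1+x)^n := by positivity
    push_cast
    calc (1+x)^(n+1) - 1 = (1+x)*((1+x)^n - 1) + x := by ring
    _ ≤ (1+x)*((n:ℝ)*x*(1+x)^n) + x := by nlinarith
    _ = (n:ℝ)*x*(1+x)^(n+1) + x := by ring
    _ ≤ (n:ℝ)*x*(1+x)^(n+1) + x*(1+x)^(n+1) := by nlinarith
    _ = ((n:ℝ)+1)*x*(1+x)^(n+1) := by ring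

lemma step_lemma (y c : ℝ) (q : ℕ) (hy : 0 < y) (hc : 0 < c) :
    (y^q)⁻¹ - q * c ≤ ((y * (1 + c * y^q))^q)⁻¹ := by
  set A := y^q with hA
  have hApos : 0 < A := pow_pos hy q
  set B := (1 + c*A)^q with hB
  have hB1 : (1:ℝ) ≤ B := one_le_pow₀ (by nlinarith)
  have hBpos : (0:ℝ) < B := lt_of_lt_of_le one_pos hB1
  have hkey : B - 1 ≤ q * (c*A) * B := aux_pow (c*A) (by positivity) q
  have hz : (y * (1 + c*A))^q = A * B := by rw [mul_pow]
  rw [hz, ← sub_nonneg]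
  have expand : (A*B)⁻¹ - (A⁻¹ - q*c) = (1 - B + q*c*A*B)/(A*B) := by
    field_simp
    ring
  rw [expand]
  apply div_nonneg _ (by positivity)
  nlinarith

/-- Discrete Gronwall-type upper bound for the Bihari–LaSalle recurrence. -/
theorem bihari_lasalle_upper
    (a : ℕ → ℝ) (c : ℝ) (p T : ℕ)
    (hc : 0 < c) (hp : 3 ≤ p)
    (hpos : ∀ t, 0 < a t)
    (hrec : ∀ t, a (t + 1) = a t + c * (a t) ^ (p - 1))
    (hbd : ∀ t ≤ T - 1, a t ≤ 1) :
    ∀ t ≤ T, 0 < 1 - c * (1 + c) ^ (p - 1) * ((p : ℝ) - 2) * (a 0) ^ (p - 2) * t →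
      a t ≤ a 0 /
        (1 - c * (1 + c) ^ (p - 1) * ((p : ℝ) - 2) * (a 0) ^ (p - 2) * t)
          ^ ((1 : ℝ) / ((p : ℝ) - 2)) := by
  intro t ht hD
  set q : ℕ := p - 2 with hq
  have hq1 : 1 ≤ q := by omega
  have hp1 : p - 1 = q + 1 := by omega
  have hpc : ((p:ℝ) - 2) = (q:ℝ) := by
    rw [hq]
    push_cast [Nat.cast_sub (by omega : 2 ≤ p)]
    ring
  set K : ℝ := c * (1+c)^(p-1) * (q:ℝ) with hK
  have hqc : (q:ℝ) * c ≤ K := by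
    have h1 : (1:ℝ) ≤ (1+c)^(p-1) := one_le_pow₀ (by linarith)
    have hq0 : (0:ℝ) < (q:ℝ) := by exact_mod_cast hq1
    rw [hK]
    have hcq : 0 ≤ c * (q:ℝ) := by positivity
    nlinarith [mul_nonneg hcq (sub_nonneg.mpr h1)]
  have H : ∀ s : ℕ, ((a 0)^q)⁻¹ - K * s ≤ ((a s)^q)⁻¹ := by
    intro s
    induction s with
    | zero => simp
    | succ n ih =>
      have heq : a (n+1) = a n * (1 + c * (a n)^q) := by
        rw [hrec n, hp1]
        ring
      have hstep : ((a n)^q)⁻¹ - q * c ≤ ((a (n+1))^q)⁻¹ := by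
        rw [heq]
        exact step_lemma (a n) c q (hpos n) hc
      push_cast
      linarith
  have hA0 : 0 < (a 0)^q := pow_pos (hpos 0) q
  have hatq : 0 < (a t)^q := pow_pos (hpos t) q
  rw [hpc] at hD ⊢
  have hDpos : 0 < 1 - K * (a 0)^q * (t:ℝ) := by
    rw [hK]
    linarith [hD]
  have h2 : (1 - K * (a 0)^q * t) / (a 0)^q ≤ ((a t)^q)⁻¹ := by
    have e : (1 - K * (a 0)^q * t) / (a 0)^q = ((a 0)^q)⁻¹ - K * t := by
      field_simp
    rw [e]
    exact H t
  have h3 : (a t)^q ≤ (a 0)^q / (1 - K * (a 0)^q * t) := by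
    rw [le_div_iff₀ hDpos]
    have h4 : (1 - K * (a 0)^q * t) / (a 0)^q * (a t)^q ≤ 1 := by
      calc (1 - K * (a 0)^q * t) / (a 0)^q * (a t)^q
          ≤ ((a t)^q)⁻¹ * (a t)^q := mul_le_mul_of_nonneg_right h2 hatq.le
        _ = 1 := inv_mul_cancel₀ hatq.ne'
    rw [div_mul_eq_mul_div, div_le_one hA0] at h4
    linarith
  have hq0 : q ≠ 0 := by omega
  have h5 : a t ≤ ((a 0)^q / (1 - K * (a 0)^q * t)) ^ ((q:ℝ))⁻¹ := by
    have e1 : a t = ((a t)^q) ^ ((q:ℝ))⁻¹ :=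
      (Real.pow_rpow_inv_natCast (hpos t).le hq0).symm
    rw [e1]
    exact Real.rpow_le_rpow (by positivity) h3 (by positivity)
  have e2 : ((a 0)^q / (1 - K * (a 0)^q * t)) ^ ((q:ℝ))⁻¹
      = a 0 / (1 - K * (a 0)^q * t) ^ ((q:ℝ))⁻¹ := by
    rw [Real.div_rpow (by positivity) hDpos.le,
      Real.pow_rpow_inv_natCast (hpos 0).le hq0]
  rw [e2] at h5
  have e3 : (1 : ℝ) / (q:ℝ) = ((q:ℝ))⁻¹ := one_div _
  calc a t ≤ a 0 / (1 - K * (a 0)^q * t) ^ ((q:ℝ))⁻¹ := h5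
    _ = a 0 / (1 - c * (1 + c)^(p-1) * (q:ℝ) * (a 0)^q * t) ^ ((1:ℝ)/(q:ℝ)) := by
        rw [e3, hK]
end

section
/- For any k ∈ ℕ, the square He_k² of the k-th probabilists' Hermite polynomial has nonzero projection onto He_0 or He_2 in the Gaussian L² inner product; equivalently, the information exponent of He_k² is at most 2, meaning min{ j > 0 : E[He_k(z)² He_j(z)] ≠ 0 for z ~ N(0,1) } ≤ 2 (interpreting the min over nonzero Hermite coefficients beyond the constant term), for k ≥ 1. -/
/-!
Gaussian integration by parts (Stein's identity `E[z p(z)] = E[p'(z)]`) together with the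
recursion `He_{n+1} = X He_n - He_n'` gives `E[He_n q] = E[q⁽ⁿ⁾]` for every polynomial `q`.
Taking `n = 2` and `q = He_k²`, and using `He_k' = k He_{k-1}`,
`E[He_k² He_2] = E[(He_k²)''] = 2 k² E[He_{k-1}²] + 2 E[He_k He_k''] = 2 k² (k-1)!`,
because `E[He_m²] = m!` and `He_k` is orthogonal to the polynomial `He_k''` of degree `< k`.
-/

/-- The k-th probabilists' Hermite polynomial evaluated at `t : ℝ`. -/
noncomputable def He (k : ℕ) (t : ℝ) : ℝ := Polynomial.aeval t (Polynomial.hermite k)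

open Polynomial MeasureTheory ProbabilityTheory
open scoped NNReal Nat Real

namespace Polynomial

theorem derivative_hermite_succ (n : ℕ) :
    derivative (hermite (n + 1)) = (n + 1 : ℤ[X]) * hermite n := by
  induction n with
  | zero => simp
  | succ n ih =>
    rw [hermite_succ (n + 1), derivative_sub, derivative_mul, derivative_X, ih, derivative_mul,
      hermite_succ n]
    simp only [derivative_add, derivative_natCast, derivative_one]
    push_cast
    ring

theorem iterate_derivative_hermite_self (n : ℕ) : derivative^[n] (hermite n) = (n ! : ℤ[X]) := by
  induction n with
  | zero => simp
  | succ n ih =>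
    rw [Function.iterate_succ_apply, derivative_hermite_succ, ← C_eq_natCast, ← C_1, ← C_add,
      iterate_derivative_C_mul, ih, Nat.factorial_succ]
    simp

theorem iterate_derivative_two_sq {R : Type*} [CommSemiring R] (p : R[X]) :
    derivative^[2] (p ^ 2) = 2 * derivative p ^ 2 + 2 * p * derivative^[2] p := by
  simp only [Function.iterate_succ_apply, Function.iterate_zero_apply, derivative_sq,
    derivative_mul, map_ofNat, derivative_ofNat]
  ring

end Polynomial

namespace ProbabilityTheory

theorem integrable_aeval_gaussianReal {R : Type*} [CommSemiring R] [Algebra R ℝ] (μ : ℝ)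
    (v : ℝ≥0) (p : R[X]) : Integrable (fun x ↦ aeval x p) (gaussianReal μ v) := by
  induction p using Polynomial.induction_on' with
  | add p q hp hq =>
    simp only [map_add]
    exact hp.add hq
  | monomial n a =>
    simpa [aeval_monomial] using
      (integrable_pow_of_mem_interior_integrableExpSet (X := id) (by simp) n).const_mul
        (algebraMap R ℝ a)

theorem hasDerivAt_gaussianPDFReal (μ : ℝ) (v : ℝ≥0) (x : ℝ) :
    HasDerivAt (gaussianPDFReal μ v) (-(x - μ) / v * gaussianPDFReal μ v x) x := by
  have hexp : HasDerivAt (fun y ↦ -(y - μ) ^ 2 / (2 * v)) (-(x - μ) / v) x :=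
    ((((hasDerivAt_id' x).sub_const μ).fun_pow 2).neg.div_const (2 * (v : ℝ))).congr_deriv
      (by push_cast; ring)
  exact (hexp.exp.const_mul (√(2 * π * v))⁻¹).congr_deriv (by rw [gaussianPDFReal]; ring)

theorem integrable_gaussianPDFReal_mul {μ : ℝ} {v : ℝ≥0} (hv : v ≠ 0) {f : ℝ → ℝ}
    (hf : Integrable f (gaussianReal μ v)) : Integrable (fun x ↦ gaussianPDFReal μ v x * f x) := by
  rw [gaussianReal_of_var_ne_zero μ hv,
    integrable_withDensity_iff_integrable_smul' (measurable_gaussianPDF μ v)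
      (ae_of_all _ fun _ ↦ gaussianPDF_lt_top)] at hf
  simpa only [toReal_gaussianPDF, smul_eq_mul] using hf

theorem integral_sub_mul_aeval_gaussianReal {R : Type*} [CommSemiring R] [Algebra R ℝ] (μ : ℝ)
    (v : ℝ≥0) (p : R[X]) :
    ∫ x, (x - μ) * aeval x p ∂gaussianReal μ v =
      v * ∫ x, aeval x (derivative p) ∂gaussianReal μ v := by
  rcases eq_or_ne v 0 with rfl | hv
  · simp
  have hint (q : R[X]) := integrable_aeval_gaussianReal μ v q
  have hscaled : Integrable (fun x ↦ (x - μ) / v * aeval x p) (gaussianReal μ v) :=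
    (((hint (X * p)).sub ((hint p).const_mul μ)).const_mul (v : ℝ)⁻¹).congr
      (ae_of_all _ fun x ↦ by simp only [Pi.sub_apply, map_mul, aeval_X]; ring)
  -- the density times `p` vanishes at `±∞`, so its derivative integrates to zero
  have hderiv (x : ℝ) : HasDerivAt (fun y ↦ gaussianPDFReal μ v y * aeval y p)
      (gaussianPDFReal μ v x • (aeval x (derivative p) - (x - μ) / v * aeval x p)) x :=
    ((hasDerivAt_gaussianPDFReal μ v x).mul (p.hasDerivAt_aeval x)).congr_deriv
      (by rw [smul_eq_mul]; ring)
  have hzero := integral_eq_zero_of_hasDerivAt_of_integrable hderiv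
    (by simpa only [Pi.sub_apply, smul_eq_mul] using
      integrable_gaussianPDFReal_mul hv ((hint _).sub hscaled))
    (integrable_gaussianPDFReal_mul hv (hint p))
  rw [← integral_gaussianReal_eq_integral_smul hv, integral_sub (hint _) hscaled] at hzero
  simp_rw [div_eq_inv_mul, mul_assoc] at hzero
  rw [integral_const_mul] at hzero
  field_simp at hzero
  linarith

end ProbabilityTheory

noncomputable def stdGaussianExpectation : ℤ[X] →+ ℝ where
  toFun p := ∫ x, aeval x p ∂gaussianReal 0 1
  map_zero' := by simp
  map_add' p q := by
    simp only [map_add]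
    exact integral_add (integrable_aeval_gaussianReal 0 1 p) (integrable_aeval_gaussianReal 0 1 q)

theorem stdGaussianExpectation_apply (p : ℤ[X]) :
    stdGaussianExpectation p = ∫ x, aeval x p ∂gaussianReal 0 1 :=
  rfl

theorem stdGaussianExpectation_one : stdGaussianExpectation 1 = 1 := by
  simp [stdGaussianExpectation_apply]

theorem stdGaussianExpectation_X_mul (p : ℤ[X]) :
    stdGaussianExpectation (X * p) = stdGaussianExpectation (derivative p) := by
  simpa [stdGaussianExpectation_apply] using integral_sub_mul_aeval_gaussianReal 0 1 p

theorem stdGaussianExpectation_hermite_succ_mul (n : ℕ) (q : ℤ[X]) :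
    stdGaussianExpectation (hermite (n + 1) * q) =
      stdGaussianExpectation (hermite n * derivative q) := by
  have hsplit : hermite (n + 1) * q =
      X * (hermite n * q) - derivative (hermite n * q) + hermite n * derivative q := by
    rw [hermite_succ, derivative_mul]
    ring
  rw [hsplit, map_add, map_sub, stdGaussianExpectation_X_mul, sub_self, zero_add]

theorem stdGaussianExpectation_hermite_mul (n : ℕ) (q : ℤ[X]) :
    stdGaussianExpectation (hermite n * q) = stdGaussianExpectation (derivative^[n] q) := by
  induction n generalizing q with
  | zero => simp
  | succ n ih =>
    rw [stdGaussianExpectation_hermite_succ_mul, ih, Function.iterate_succ_apply]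

theorem stdGaussianExpectation_hermite_mul_of_natDegree_lt {n : ℕ} {q : ℤ[X]}
    (h : q.natDegree < n) : stdGaussianExpectation (hermite n * q) = 0 := by
  rw [stdGaussianExpectation_hermite_mul, iterate_derivative_eq_zero h, map_zero]

theorem stdGaussianExpectation_hermite_sq (n : ℕ) :
    stdGaussianExpectation (hermite n ^ 2) = n ! := by
  rw [sq, stdGaussianExpectation_hermite_mul, iterate_derivative_hermite_self, ← nsmul_one,
    map_nsmul, stdGaussianExpectation_one, nsmul_one]

theorem stdGaussianExpectation_hermite_succ_sq_mul_hermite_two (n : ℕ) :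
    stdGaussianExpectation (hermite (n + 1) ^ 2 * hermite 2) = 2 * (n + 1) ^ 2 * n ! := by
  have hdeg : (derivative^[2] (hermite (n + 1))).natDegree < n + 1 :=
    (natDegree_iterate_derivative _ 2).trans_lt (by rw [natDegree_hermite]; omega)
  have hexpand : derivative^[2] (hermite (n + 1) ^ 2) =
      (2 * (n + 1) ^ 2) • hermite n ^ 2 +
        2 • (hermite (n + 1) * derivative^[2] (hermite (n + 1))) := by
    rw [iterate_derivative_two_sq, derivative_hermite_succ, nsmul_eq_mul, nsmul_eq_mul]
    push_cast
    ring
  rw [mul_comm, stdGaussianExpectation_hermite_mul, hexpand, map_add, map_nsmul, map_nsmul,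
    stdGaussianExpectation_hermite_sq, stdGaussianExpectation_hermite_mul_of_natDegree_lt hdeg]
  ring

open MeasureTheory ProbabilityTheory in
/-- The square of a Hermite polynomial has information exponent at most 2:
for k ≥ 1, the second Hermite coefficient E_{z ~ N(0,1)}[He_k(z)² He_2(z)] is nonzero. -/
theorem hermite_sq_information_exponent_le_two (k : ℕ) (hk : 1 ≤ k) :
    ∫ z, He k z ^ 2 * He 2 z ∂(gaussianReal 0 1) ≠ 0 := by
  obtain ⟨n, rfl⟩ := Nat.exists_eq_add_of_le' hk
  have hvalue : ∫ z, He (n + 1) z ^ 2 * He 2 z ∂(gaussianReal 0 1) = 2 * (n + 1) ^ 2 * n ! := by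
    rw [← stdGaussianExpectation_hermite_succ_sq_mul_hermite_two, stdGaussianExpectation_apply]
    simp only [He, map_mul, map_pow]
  rw [hvalue]
  positivity
end

section
/- Let σ be the ReLU function and b ∈ ℝ. For i ≥ 2, the i-th Hermite coefficient of z ↦ ReLU(z + b) with respect to the standard Gaussian satisfies E_{z~N(0,1)}[ReLU(z+b) He_i(z)] = ((−1)^i/√(2π)) e^{−b²/2} He_{i−2}(b). -/
/-! With `G x = exp (-x ^ 2 / 2)`, the recurrence `He (n + 1) = X * He n - He n'` says
`(He n * G)' = -He (n + 1) * G`; hence `-((x + b) * He (n + 1) x + He n x) * G x` is an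
antiderivative of `(x + b) * He (n + 2) x * G x`. As `ReLU (z + b)` vanishes for `z ≤ -b`, the
Hermite coefficient is `(2π)^(-1/2)` times the integral of this derivative over `(-b, ∞)`, namely
`He n (-b) * G b = (-1) ^ n * He n b * G b`; the boundary term at `∞` vanishes because the
antiderivative and its derivative are both polynomials times `G`, hence integrable. -/

open MeasureTheory ProbabilityTheory Polynomial Filter Real Set Topology

theorem integrable_eval_mul_exp_neg_mul_sq {c : ℝ} (hc : 0 < c) (p : ℝ[X]) :
    Integrable fun x => p.eval x * rexp (-c * x ^ 2) := by
  induction p using Polynomial.induction_on' with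
  | add p q hp hq => simpa only [eval_add, add_mul] using hp.fun_add hq
  | monomial n a =>
    have h := integrable_rpow_mul_exp_neg_mul_sq hc (s := n)
      (neg_one_lt_zero.trans_le n.cast_nonneg)
    simpa only [eval_monomial, rpow_natCast, mul_assoc] using h.const_mul a

theorem integrable_eval_mul_gaussian (p : ℝ[X]) :
    Integrable fun x => p.eval x * rexp (-(x ^ 2 / 2)) := by
  simpa only [neg_mul, one_div, inv_mul_eq_div] using
    integrable_eval_mul_exp_neg_mul_sq (c := 1 / 2) (by norm_num) p

theorem He_eq_eval_map (n : ℕ) (x : ℝ) :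
    He n x = ((hermite n).map (Int.castRingHom ℝ)).eval x := by
  rw [He, eval_map, aeval_def, algebraMap_int_eq]

theorem He_neg (n : ℕ) (x : ℝ) : He n (-x) = (-1) ^ n * He n x := by
  simp only [He, aeval_eq_sum_range, Finset.mul_sum]
  refine Finset.sum_congr rfl fun k _ => ?_
  by_cases hk : Even (n + k)
  · have : (-1 : ℝ) ^ k = (-1) ^ n := by
      rw [neg_one_pow_eq_pow_mod_two, neg_one_pow_eq_pow_mod_two (n := n)]
      obtain ⟨m, hm⟩ := hk
      congr 1
      omega
    rw [zsmul_eq_mul, zsmul_eq_mul, neg_pow, this]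
    ring
  · simp [coeff_hermite_of_odd_add (Nat.not_even_iff_odd.mp hk)]

theorem hasDerivAt_He (n : ℕ) (x : ℝ) : HasDerivAt (He n) (x * He n x - He (n + 1) x) x := by
  have h : He (n + 1) x = x * He n x - aeval x (derivative (hermite n)) := by
    simp [He, hermite_succ]
  rw [h, sub_sub_cancel]
  exact (hermite n).hasDerivAt_aeval x

theorem hasDerivAt_He_mul_gaussian (n : ℕ) (x : ℝ) :
    HasDerivAt (fun x => He n x * rexp (-(x ^ 2 / 2)))
      (-(He (n + 1) x * rexp (-(x ^ 2 / 2)))) x := by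
  have hG : HasDerivAt (fun x : ℝ => rexp (-(x ^ 2 / 2))) (-x * rexp (-(x ^ 2 / 2))) x := by
    convert (((hasDerivAt_pow 2 x).div_const 2).fun_neg).exp using 1
    simp
    ring
  exact ((hasDerivAt_He n x).fun_mul hG).congr_deriv (by ring)

theorem hasDerivAt_shift_mul_He_mul_gaussian (b : ℝ) (n : ℕ) (x : ℝ) :
    HasDerivAt
      (fun x => -((x + b) * (He (n + 1) x * rexp (-(x ^ 2 / 2))) + He n x * rexp (-(x ^ 2 / 2))))
      ((x + b) * (He (n + 2) x * rexp (-(x ^ 2 / 2)))) x := by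
  refine ((((hasDerivAt_id' x).add_const b).fun_mul
    (hasDerivAt_He_mul_gaussian (n + 1) x)).fun_add
    (hasDerivAt_He_mul_gaussian n x)).fun_neg.congr_deriv ?_
  ring

theorem integral_Ioi_shift_mul_He_mul_gaussian (b : ℝ) (n : ℕ) :
    ∫ x in Ioi (-b), (x + b) * (He (n + 2) x * rexp (-(x ^ 2 / 2))) =
      He n (-b) * rexp (-(b ^ 2 / 2)) := by
  set F := fun x =>
    -((x + b) * (He (n + 1) x * rexp (-(x ^ 2 / 2))) + He n x * rexp (-(x ^ 2 / 2)))
  have hF' : ∀ x, HasDerivAt F ((x + b) * (He (n + 2) x * rexp (-(x ^ 2 / 2)))) x :=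
    hasDerivAt_shift_mul_He_mul_gaussian b n
  have hF'int : Integrable fun x => (x + b) * (He (n + 2) x * rexp (-(x ^ 2 / 2))) := by
    convert integrable_eval_mul_gaussian
      ((X + C b) * (hermite (n + 2)).map (Int.castRingHom ℝ)) using 2
    simp [He_eq_eval_map, mul_assoc]
  have hFint : Integrable F := by
    convert integrable_eval_mul_gaussian
      (-((X + C b) * (hermite (n + 1)).map (Int.castRingHom ℝ) +
        (hermite n).map (Int.castRingHom ℝ))) using 2
    simp [F, He_eq_eval_map]
    ring
  have hlim : Tendsto F atTop (𝓝 0) :=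
    tendsto_zero_of_hasDerivAt_of_integrableOn_Ioi (a := -b) (fun x _ => hF' x)
      hF'int.integrableOn hFint.integrableOn
  rw [integral_Ioi_of_hasDerivAt_of_tendsto' (fun x _ => hF' x) hF'int.integrableOn hlim]
  simp [F]

theorem integral_max_add_mul (b : ℝ) (f : ℝ → ℝ) :
    ∫ z, max (z + b) 0 * f z = ∫ z in Ioi (-b), (z + b) * f z := by
  rw [← integral_indicator measurableSet_Ioi]
  congr 1 with z
  by_cases hz : -b < z
  · simp [indicator_of_mem (mem_Ioi.mpr hz), max_eq_left (by linarith : 0 ≤ z + b)]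
  · simp [indicator_of_notMem (by simpa using hz : z ∉ Ioi (-b)),
      max_eq_right (by linarith : z + b ≤ 0)]

theorem integral_gaussianReal_zero_one (f : ℝ → ℝ) :
    ∫ z, f z ∂gaussianReal 0 1 = (√(2 * π))⁻¹ * ∫ z, f z * rexp (-(z ^ 2 / 2)) := by
  rw [integral_gaussianReal_eq_integral_smul one_ne_zero, ← integral_const_mul]
  congr 1 with z
  simp only [gaussianPDFReal, NNReal.coe_one, mul_one, sub_zero, smul_eq_mul]
  ring_nf

open MeasureTheory ProbabilityTheory in
/-- Hermite coefficients of shifted ReLU: for i ≥ 2,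
E_{z~N(0,1)}[ReLU(z+b) He_i(z)] = ((−1)^i/√(2π)) e^{−b²/2} He_{i−2}(b). -/
theorem relu_hermite_coefficient (b : ℝ) (i : ℕ) (hi : 2 ≤ i) :
    ∫ z, max (z + b) 0 * He i z ∂(gaussianReal 0 1) =
      (-1 : ℝ) ^ i / Real.sqrt (2 * Real.pi) * Real.exp (-b ^ 2 / 2) * He (i - 2) b := by
  obtain ⟨n, rfl⟩ := Nat.exists_eq_add_of_le' hi
  simp only [integral_gaussianReal_zero_one, mul_assoc, integral_max_add_mul,
    integral_Ioi_shift_mul_He_mul_gaussian, He_neg, Nat.add_sub_cancel, neg_div]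
  ring
end

section
/- For x ≥ 0, the Gaussian tail satisfies ∫_x^∞ (1/√(2π)) e^{−t²/2} dt ≤ (1/2) e^{−x²/2}, and for any β > 1 and all x ∈ ℝ, ∫_x^∞ (1/√(2π)) e^{−t²/2} dt ≥ (√(2e(β−1))/(2β√π)) e^{−βx²/2}. -/
/-!
Upper bound: for `0 ≤ x ≤ t` we have `t² ≥ x² + (t - x)²`, so on `(x, ∞)` the Gaussian density is
dominated by `e^{-x²/2}` times the density shifted to `x`, whose tail integral is `1/2`.

Lower bound: `e·s ≤ eˢ` with `s = (β - 1)t²` gives `√(e(β-1)) · t · e^{-βt²/2} ≤ e^{-t²/2}`, and the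
left side has the explicit antiderivative `-√(e(β-1)) e^{-βt²/2} / β`.
-/

open MeasureTheory Real Set Filter Topology

theorem setIntegral_Ioi_comp_sub_right {E : Type*} [NormedAddCommGroup E] [NormedSpace ℝ E]
    (f : ℝ → E) (x : ℝ) : ∫ t in Ioi x, f (t - x) = ∫ u in Ioi 0, f u := by
  have h := (measurePreserving_sub_right volume x).setIntegral_preimage_emb
    (measurableEmbedding_subRight x) f (Ioi 0)
  rwa [preimage_sub_const_Ioi, zero_add] at h

theorem integral_Ioi_exp_neg_mul_sq_le {b x : ℝ} (hb : 0 < b) (hx : 0 ≤ x) :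
    ∫ t in Ioi x, exp (-b * t ^ 2) ≤ exp (-b * x ^ 2) * (√(π / b) / 2) := by
  have hdom : ∀ t ∈ Ioi x, exp (-b * t ^ 2) ≤ exp (-b * x ^ 2) * exp (-b * (t - x) ^ 2) := by
    intro t (ht : x < t)
    rw [← exp_add, exp_le_exp]
    nlinarith [mul_nonneg (mul_nonneg hb.le hx) (sub_nonneg.2 ht.le)]
  have hg := integrable_exp_neg_mul_sq hb
  calc ∫ t in Ioi x, exp (-b * t ^ 2)
      ≤ ∫ t in Ioi x, exp (-b * x ^ 2) * exp (-b * (t - x) ^ 2) :=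
        setIntegral_mono_on hg.integrableOn ((hg.comp_sub_right x).const_mul _).integrableOn
          measurableSet_Ioi hdom
    _ = exp (-b * x ^ 2) * (√(π / b) / 2) := by
        rw [integral_const_mul, setIntegral_Ioi_comp_sub_right (fun u => exp (-b * u ^ 2)),
          integral_gaussian_Ioi]

theorem integral_Ioi_mul_exp_neg_mul_sq {b : ℝ} (hb : 0 < b) (x : ℝ) :
    ∫ t in Ioi x, t * exp (-b * t ^ 2) = exp (-b * x ^ 2) / (2 * b) := by
  have hderiv : ∀ t ∈ Ici x,
      HasDerivAt (fun t => -exp (-b * t ^ 2) / (2 * b)) (t * exp (-b * t ^ 2)) t := by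
    intro t _
    refine (((hasDerivAt_pow 2 t).const_mul (-b)).exp.neg.div_const (2 * b)).congr_deriv ?_
    field_simp
    ring
  have hlim : Tendsto (fun t => -exp (-b * t ^ 2) / (2 * b)) atTop (𝓝 0) := by
    have h := (tendsto_pow_atTop two_ne_zero).const_mul_atTop_of_neg (neg_neg_of_pos hb)
    simpa using (tendsto_exp_atBot.comp h).neg.div_const (2 * b)
  rw [integral_Ioi_of_hasDerivAt_of_tendsto' hderiv (integrable_mul_exp_neg_mul_sq hb).integrableOn
    hlim]
  ring

theorem sqrt_exp_one_mul_mul_le_exp {a : ℝ} (ha : 0 ≤ a) (t : ℝ) :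
    √(exp 1 * a) * t ≤ exp (a * t ^ 2 / 2) := by
  rcases le_or_gt t 0 with ht | ht
  · exact (mul_nonpos_of_nonneg_of_nonpos (sqrt_nonneg _) ht).trans (exp_pos _).le
  · calc √(exp 1 * a) * t = √(exp 1 * (a * t ^ 2)) := by
          rw [← mul_assoc, sqrt_mul (by positivity : 0 ≤ exp 1 * a) (t ^ 2), sqrt_sq ht.le]
      _ ≤ √(exp (a * t ^ 2)) := sqrt_le_sqrt exp_one_mul_le_exp
      _ = exp (a * t ^ 2 / 2) := (exp_half _).symm

theorem sqrt_exp_one_mul_sub_one_mul_mul_exp_le {β : ℝ} (hβ : 1 ≤ β) (t : ℝ) :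
    √(exp 1 * (β - 1)) * (t * exp (-(β / 2) * t ^ 2)) ≤ exp (-t ^ 2 / 2) :=
  calc √(exp 1 * (β - 1)) * (t * exp (-(β / 2) * t ^ 2))
      = √(exp 1 * (β - 1)) * t * exp (-(β / 2) * t ^ 2) := (mul_assoc _ _ _).symm
    _ ≤ exp ((β - 1) * t ^ 2 / 2) * exp (-(β / 2) * t ^ 2) := by
        gcongr; exact sqrt_exp_one_mul_mul_le_exp (sub_nonneg.2 hβ) t
    _ = exp (-t ^ 2 / 2) := by rw [← exp_add]; ring_nf

theorem integral_Ioi_gaussian_le_half_exp {x : ℝ} (hx : 0 ≤ x) :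
    ∫ t in Ioi x, (√(2 * π))⁻¹ * exp (-t ^ 2 / 2) ≤ 1 / 2 * exp (-x ^ 2 / 2) := by
  have hhalf (t : ℝ) : exp (-t ^ 2 / 2) = exp (-(1 / 2) * t ^ 2) := by ring_nf
  calc ∫ t in Ioi x, (√(2 * π))⁻¹ * exp (-t ^ 2 / 2)
      = (√(2 * π))⁻¹ * ∫ t in Ioi x, exp (-(1 / 2) * t ^ 2) := by
        simp only [hhalf, integral_const_mul]
    _ ≤ (√(2 * π))⁻¹ * (exp (-(1 / 2) * x ^ 2) * (√(π / (1 / 2)) / 2)) := by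
        gcongr; exact integral_Ioi_exp_neg_mul_sq_le one_half_pos hx
    _ = 1 / 2 * exp (-x ^ 2 / 2) := by
        rw [hhalf, show π / (1 / 2) = 2 * π by ring]
        field_simp

theorem sqrt_mul_exp_le_integral_Ioi_gaussian {β : ℝ} (hβ : 1 ≤ β) (x : ℝ) :
    √(2 * exp 1 * (β - 1)) / (2 * β * √π) * exp (-β * x ^ 2 / 2)
      ≤ ∫ t in Ioi x, (√(2 * π))⁻¹ * exp (-t ^ 2 / 2) := by
  have hβ2 : 0 < β / 2 := by positivity
  have hsqrt2 (y : ℝ) : √(2 * y) = √2 * √y := sqrt_mul zero_le_two y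
  have hφ : Integrable fun t => (√(2 * π))⁻¹ * exp (-t ^ 2 / 2) := by
    simpa only [show ∀ t : ℝ, -t ^ 2 / 2 = -(1 / 2) * t ^ 2 by intro t; ring]
      using (integrable_exp_neg_mul_sq one_half_pos).const_mul _
  calc √(2 * exp 1 * (β - 1)) / (2 * β * √π) * exp (-β * x ^ 2 / 2)
      = (√(2 * π))⁻¹ * √(exp 1 * (β - 1)) * ∫ t in Ioi x, t * exp (-(β / 2) * t ^ 2) := by
        rw [integral_Ioi_mul_exp_neg_mul_sq hβ2, mul_assoc 2, hsqrt2, hsqrt2,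
          show -β * x ^ 2 / 2 = -(β / 2) * x ^ 2 by ring]
        field_simp
        rw [sq_sqrt zero_le_two, mul_comm]
    _ = ∫ t in Ioi x, (√(2 * π))⁻¹ * √(exp 1 * (β - 1)) * (t * exp (-(β / 2) * t ^ 2)) :=
        (integral_const_mul _ _).symm
    _ ≤ ∫ t in Ioi x, (√(2 * π))⁻¹ * exp (-t ^ 2 / 2) :=
        setIntegral_mono_on ((integrable_mul_exp_neg_mul_sq hβ2).const_mul _).integrableOn
          hφ.integrableOn measurableSet_Ioi fun t _ => by
            rw [mul_assoc]; gcongr; exact sqrt_exp_one_mul_sub_one_mul_mul_exp_le hβ t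

/-- Two-sided Chernoff-type bounds on the standard Gaussian tail (Chang et al. 2011):
for x ≥ 0 the tail is at most (1/2)e^{−x²/2}; and for any β > 1 and every real x the
tail is at least (√(2e(β−1))/(2β√π)) e^{−βx²/2}. -/
theorem gaussian_tail_two_sided_bounds :
    (∀ x : ℝ, 0 ≤ x →
      ∫ t in Set.Ioi x, (Real.sqrt (2 * Real.pi))⁻¹ * Real.exp (-t ^ 2 / 2)
        ≤ (1 / 2) * Real.exp (-x ^ 2 / 2)) ∧
    (∀ β : ℝ, 1 < β → ∀ x : ℝ,
      Real.sqrt (2 * Real.exp 1 * (β - 1)) / (2 * β * Real.sqrt Real.pi)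
          * Real.exp (-β * x ^ 2 / 2)
        ≤ ∫ t in Set.Ioi x, (Real.sqrt (2 * Real.pi))⁻¹ * Real.exp (-t ^ 2 / 2)) :=
  ⟨fun _ hx => integral_Ioi_gaussian_le_half_exp hx,
    fun _ hβ => sqrt_mul_exp_le_integral_Ioi_gaussian hβ.le⟩
end
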